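/- arXiv:1507.03161 — 4 statements merged into one kernel-verified Lean document; each statement's English description precedes it below -/
import Mathlib

section
/- The ℤ/2-linear map Λ_n^q → Λ_n^{q+2}, x ↦ R²·x, is injective for 0 ≤ q ≤ m−3 and surjective for m−1 ≤ q ≤ 2m−4. -/
open CategoryTheory AlgebraicTopology Finset

noncomputable section

/-- The singular chain complex functor with coefficients in a commutative ring `R`:
the free `R`-module functor applied levelwise to the singular simplicial set, followed by
the alternating face map complex. -/
def singularChainComplex (R : Type) [CommRing R] : TopCat ⥤ ChainComplex (ModuleCat R) ℕ :=
  TopCat.toSSet ⋙ ((SimplicialObject.whiskering _ _).obj (ModuleCat.free R)) ⋙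
    alternatingFaceMapComplex _

/-- Singular homology with coefficients in `R`, as a functor `TopCat ⥤ ModuleCat R`. -/
def SH (R : Type) [CommRing R] (q : ℕ) : TopCat ⥤ ModuleCat R :=
  singularChainComplex R ⋙ HomologicalComplex.homologyFunctor _ _ q

/-- View a morphism of `ModuleCat R` as a linear map. -/
def homToLinear {R : Type} [CommRing R] {M N : ModuleCat R} (f : M ⟶ N) : M →ₗ[R] N where
  toFun := f
  map_add' := map_add f.hom
  map_smul' := map_smul f.hom

/-- The polynomial ring `(ℤ/2)[R, V_1, …, V_{n-1}]` for `n = 2m+1`; the variable `none`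
is `R` and the variable `some i` is `V_{i+1}`. -/
abbrev PolyRing (m : ℕ) := MvPolynomial (Option (Fin (2*m))) (ZMod 2)

/-- The relations (R1): `V_i² + R·V_i`. -/
def rel1 (m : ℕ) : Set (PolyRing m) :=
  Set.range fun i : Fin (2*m) =>
    (MvPolynomial.X (some i))^2 + MvPolynomial.X none * MvPolynomial.X (some i)

/-- The relations (R2): `∏_{i∈S} V_i` for `|S| ≥ m`. -/
def rel2 (m : ℕ) : Set (PolyRing m) :=
  {p | ∃ S : Finset (Fin (2*m)), m ≤ S.card ∧ p = ∏ i ∈ S, MvPolynomial.X (some i)}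

/-- The relations (R3): `∑_{S⊆L} R^{|L∖S|-1} ∏_{i∈S} V_i` for `|L| ≥ m+1`. -/
def rel3 (m : ℕ) : Set (PolyRing m) :=
  {p | ∃ L : Finset (Fin (2*m)), m+1 ≤ L.card ∧
    p = ∑ S ∈ L.powerset,
      (MvPolynomial.X none)^(L.card - S.card - 1) * ∏ i ∈ S, MvPolynomial.X (some i)}

/-- The ideal `𝓘_n` generated by the relations (R1), (R2), (R3). -/
def idealI (m : ℕ) : Ideal (PolyRing m) := Ideal.span (rel1 m ∪ rel2 m ∪ rel3 m)

/-- The ring `Λ_n = (ℤ/2)[R, V_1, …, V_{n-1}]/𝓘_n`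
(isomorphic to `H^*(M_n/τ; ℤ/2)` by Hausmann–Knutson). -/
abbrev LambdaRing (m : ℕ) := PolyRing m ⧸ idealI m

/-- The degree-`q` homogeneous component `Λ_n^q` of `Λ_n`, i.e. the image in the quotient of
the homogeneous polynomials of degree `q`. -/
def LambdaComp (m q : ℕ) : Submodule (ZMod 2) (LambdaRing m) :=
  (MvPolynomial.homogeneousSubmodule (Option (Fin (2*m))) (ZMod 2) q).map
    (Ideal.Quotient.mkₐ (ZMod 2) (idealI m)).toLinearMap

/-- Multiplication by `R²` on `Λ_n`, as a `ℤ/2`-linear map. -/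
def mulR2 (m : ℕ) : LambdaRing m →ₗ[ZMod 2] LambdaRing m :=
  LinearMap.mulLeft (ZMod 2)
    ((Ideal.Quotient.mkₐ (ZMod 2) (idealI m)) ((MvPolynomial.X none)^2))

/-!
Modulo (R1) and (R2) a monomial of degree `d` whose `V`-variables form the set `S` equals
`R^(d-|S|) V_S`, and `V_S = 0` once `|S| ≥ m`. So `Λ^d` is spanned by these classes with
`|S| < m`, and for `d ≥ m + 1` each of them is `R²` times the class with the same `S` in
degree `d - 2`: this is surjectivity.

For injectivity, specialise to `R = t`, `V_i = t·[i ∈ T]` for every `T` with `|T| < m`.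
This kills (R1) and (R2) and sends (R3) into `(t^m)`, so if `R²p ∈ 𝓘` with `p` homogeneous
of degree at most `m - 3`, then `p(1, 1_T) = 0` for all such `T`. Möbius inversion over
subsets makes the coefficient sum of `p` over each `V`-support `S` with `|S| < m` vanish, so
`p ∈ 𝓘` by the spanning description. When `m = 2` one needs `R² ∉ 𝓘` instead: the linear
form adding up the `t^m`-coefficients of all these specialisations vanishes on `𝓘`, since an
(R3) relation with `|L| = m + 1` survives for exactly the `2^(m-1)` sets `T` disjoint from
`L`, but it takes the value `5` on `R²`.
-/

open MvPolynomial

theorem LinearMap.map_eq_zero_of_mem_ideal_span {R A M : Type*} [CommSemiring R]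
    [CommSemiring A] [Algebra R A] [AddCommMonoid M] [Module R M] (ℓ : A →ₗ[R] M) {s : Set A}
    (h : ∀ a, ∀ g ∈ s, ℓ (a * g) = 0) {x : A} (hx : x ∈ Ideal.span s) : ℓ x = 0 := by
  suffices ∀ a, ℓ (a * x) = 0 by simpa using this 1
  induction hx using Submodule.span_induction with
  | mem g hg => exact fun a => h a g hg
  | zero => simp
  | add x y _ _ hx hy => intro a; rw [mul_add, map_add, hx, hy, add_zero]
  | smul b x _ hx => intro a; rw [smul_eq_mul, ← mul_assoc]; exact hx _

theorem Finset.eq_zero_of_sum_powerset_eq_zero {α M : Type*} [DecidableEq α] [AddCommMonoid M]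
    {F : Finset α → M} {k : ℕ}
    (h : ∀ T : Finset α, T.card < k → ∑ S ∈ T.powerset, F S = 0)
    (T : Finset α) (hT : T.card < k) : F T = 0 := by
  induction T using Finset.strongInduction with
  | H T ih =>
    have hproper : ∀ S ∈ T.powerset.erase T, F S = 0 := fun S hS => by
      obtain ⟨hne, hsub⟩ := Finset.mem_erase.mp hS
      have hsub := Finset.mem_powerset.mp hsub
      exact ih S (hsub.ssubset_of_ne hne) ((Finset.card_le_card hsub).trans_lt hT)
    simpa [← Finset.add_sum_erase _ _ (Finset.mem_powerset_self T), Finset.sum_eq_zero hproper]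
      using h T hT

theorem MvPolynomial.IsHomogeneous.aeval_C_mul_X {σ R : Type*} [CommSemiring R]
    {p : MvPolynomial σ R} {d : ℕ} (hp : p.IsHomogeneous d) (c : σ → R) :
    MvPolynomial.aeval (fun i => Polynomial.C (c i) * Polynomial.X) p =
      Polynomial.C (eval c p) * Polynomial.X ^ d := by
  have hmono : ∀ f ∈ p.support,
      MvPolynomial.aeval (fun i => Polynomial.C (c i) * Polynomial.X) (monomial f (coeff f p)) =
        Polynomial.C (eval c (monomial f (coeff f p))) * Polynomial.X ^ d := by
    intro f hf
    simp only [aeval_monomial, eval_monomial, Finsupp.prod, mul_pow, Finset.prod_mul_distrib,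
      Finset.prod_pow_eq_pow_sum, ← hp.degree_eq_sum_deg_support hf, ← Polynomial.C_pow,
      ← map_prod, Polynomial.algebraMap_eq, map_mul, mul_assoc]
  conv_lhs => rw [p.as_sum]
  conv_rhs => rw [p.as_sum]
  rw [map_sum, Finset.sum_congr rfl hmono, ← Finset.sum_mul, map_sum, map_sum]

namespace LambdaRing

section TestPoint

variable {ι R : Type*} [CommSemiring R] [DecidableEq ι]

def vCoeff (p : MvPolynomial (Option ι) R) (S : Finset ι) : R :=
  ∑ f ∈ p.support with f.some.support = S, coeff f p

def testPoint (T : Finset ι) : Option ι → R :=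
  fun v => v.elim 1 fun i => if i ∈ T then 1 else 0

theorem eval_testPoint_monomial (T : Finset ι) (f : Option ι →₀ ℕ) (a : R) :
    eval (testPoint T) (monomial f a) = if f.some.support ⊆ T then a else 0 := by
  rw [eval_monomial,
    Finsupp.prod_option_index _ _ (fun _ => pow_zero _) (fun _ _ _ => pow_add _ _ _)]
  have hpow : ∀ i ∈ f.some.support,
      (testPoint T (some i) : R) ^ f.some i = if i ∈ T then 1 else 0 := by
    intro i hi
    have hi' : f (some i) ≠ 0 := by simpa using hi
    simp [testPoint, ite_pow, zero_pow hi']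
  rw [Finsupp.prod, Finset.prod_congr rfl hpow, Finset.prod_ite_zero]
  simp only [testPoint, Option.elim, one_pow, Finset.prod_const_one, mul_ite, mul_one, mul_zero]
  exact if_congr Finset.subset_iff.symm rfl rfl

theorem eval_testPoint (T : Finset ι) (p : MvPolynomial (Option ι) R) :
    eval (testPoint T) p = ∑ S ∈ T.powerset, vCoeff p S := by
  conv_lhs => rw [p.as_sum]
  simp only [map_sum, eval_testPoint_monomial, vCoeff, Finset.sum_filter]
  rw [Finset.sum_comm]
  simp [Finset.sum_ite_eq]

end TestPoint

section TestHom

variable {ι R : Type*} [CommSemiring R] [DecidableEq ι]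

def testHom (T : Finset ι) : MvPolynomial (Option ι) R →ₐ[R] Polynomial R :=
  aeval fun v => Polynomial.C (testPoint T v) * Polynomial.X

@[simp]
theorem testHom_X_none (T : Finset ι) :
    testHom T (X none : MvPolynomial (Option ι) R) = Polynomial.X := by
  simp [testHom, testPoint]

@[simp]
theorem testHom_X_some (T : Finset ι) (i : ι) :
    testHom T (X (some i) : MvPolynomial (Option ι) R) = if i ∈ T then Polynomial.X else 0 := by
  by_cases h : i ∈ T <;> simp [testHom, testPoint, h]

theorem testHom_of_isHomogeneous (T : Finset ι) {p : MvPolynomial (Option ι) R} {d : ℕ}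
    (hp : p.IsHomogeneous d) :
    testHom T p = Polynomial.C (eval (testPoint T) p) * Polynomial.X ^ d :=
  hp.aeval_C_mul_X _

theorem coeff_zero_testHom (T : Finset ι) (p : MvPolynomial (Option ι) R) :
    (testHom T p).coeff 0 = constantCoeff p := by
  have hcomp : Polynomial.constantCoeff.comp (testHom T).toRingHom =
      (constantCoeff : MvPolynomial (Option ι) R →+* R) := by
    refine MvPolynomial.ringHom_ext (fun c => by simp [testHom]) fun v => ?_
    cases v <;> simp [testHom, testPoint, apply_ite (Polynomial.coeff · 0)]
  simpa using RingHom.congr_fun hcomp p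

end TestHom

section TestHomRelations

variable {m : ℕ} {T : Finset (Fin (2*m))}

theorem testHom_eq_zero_of_mem_rel1 {g : PolyRing m} (hg : g ∈ rel1 m) : testHom T g = 0 := by
  obtain ⟨i, rfl⟩ := hg
  by_cases h : i ∈ T <;> simp [h, sq, CharTwo.add_self_eq_zero]

theorem testHom_eq_zero_of_mem_rel2 {g : PolyRing m} (hg : g ∈ rel2 m) (hT : T.card < m) :
    testHom T g = 0 := by
  obtain ⟨S, hS, rfl⟩ := hg
  obtain ⟨i, hiS, hiT⟩ := Finset.exists_mem_notMem_of_card_lt_card (hT.trans_le hS)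
  rw [map_prod]
  exact Finset.prod_eq_zero hiS (by simp [hiT])

theorem testHom_rel3_sum {L : Finset (Fin (2*m))} (hTL : T.card < L.card) :
    testHom T (∑ S ∈ L.powerset,
        (X none : PolyRing m) ^ (L.card - S.card - 1) * ∏ i ∈ S, X (some i)) =
      2 ^ (L ∩ T).card • Polynomial.X ^ (L.card - 1) := by
  have hterm : ∀ S ∈ L.powerset, testHom T ((X none : PolyRing m) ^ (L.card - S.card - 1) *
      ∏ i ∈ S, X (some i)) = if S ⊆ T then Polynomial.X ^ (L.card - 1) else 0 := by
    intro S hS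
    simp only [map_mul, map_pow, map_prod, testHom_X_none, testHom_X_some, Finset.prod_ite_zero,
      Finset.prod_const, ← Finset.subset_iff]
    split_ifs with h
    · have := Finset.card_le_card h
      rw [← pow_add]
      congr 1
      omega
    · exact mul_zero _
  have hfilter : L.powerset.filter (· ⊆ T) = (L ∩ T).powerset := by
    ext S
    simp only [Finset.mem_filter, Finset.mem_powerset, Finset.subset_inter_iff]
  rw [map_sum, Finset.sum_congr rfl hterm, ← Finset.sum_filter, hfilter, Finset.sum_const,
    Finset.card_powerset]

theorem idealI_le_comap_testHom (hT : T.card < m) :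
    idealI m ≤ (Ideal.span {Polynomial.X ^ m}).comap (testHom T) := by
  rw [idealI, Ideal.span_le]
  rintro g ((hg | hg) | ⟨L, hL, rfl⟩) <;>
    simp only [SetLike.mem_coe, Ideal.mem_comap, Ideal.mem_span_singleton]
  · rw [testHom_eq_zero_of_mem_rel1 hg]
    exact dvd_zero _
  · rw [testHom_eq_zero_of_mem_rel2 hg hT]
    exact dvd_zero _
  · rw [testHom_rel3_sum (by omega), nsmul_eq_mul]
    exact (pow_dvd_pow _ (by omega)).mul_left _

end TestHomRelations

section CoeffFunctional

variable {m : ℕ}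

def coeffFunctional (m : ℕ) : PolyRing m →ₗ[ZMod 2] ZMod 2 :=
  ∑ T : Finset (Fin (2*m)) with T.card < m,
    Polynomial.lcoeff (ZMod 2) m ∘ₗ (testHom T).toLinearMap

theorem coeffFunctional_apply (x : PolyRing m) :
    coeffFunctional m x = ∑ T : Finset (Fin (2*m)) with T.card < m, (testHom T x).coeff m := by
  simp [coeffFunctional]

theorem card_filter_card_lt_inter_eq_empty {L : Finset (Fin (2*m))} (hL : L.card = m + 1) :
    (Finset.univ.filter fun T : Finset (Fin (2*m)) => T.card < m ∧ L ∩ T = ∅).card =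
      2 ^ (m - 1) := by
  have hcompl : Lᶜ.card = m - 1 := by rw [Finset.card_compl, Fintype.card_fin]; omega
  have hset : (Finset.univ.filter fun T : Finset (Fin (2*m)) => T.card < m ∧ L ∩ T = ∅) =
      Lᶜ.powerset := by
    ext T
    simp only [Finset.mem_filter, Finset.mem_univ, true_and, Finset.mem_powerset,
      Finset.subset_compl_iff_disjoint_left, ← Finset.disjoint_iff_inter_eq_empty]
    refine ⟨And.right, fun h => ⟨?_, h⟩⟩
    have := (Finset.card_union_of_disjoint h).symm.le.trans (Finset.card_le_univ _)
    rw [Fintype.card_fin] at this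
    omega
  rw [hset, Finset.card_powerset, hcompl]

theorem coeffFunctional_mul_eq_zero (hm : 2 ≤ m) (a : PolyRing m) {g : PolyRing m}
    (hg : g ∈ rel1 m ∪ rel2 m ∪ rel3 m) : coeffFunctional m (a * g) = 0 := by
  rw [coeffFunctional_apply]
  rcases hg with (hg | hg) | ⟨L, hL, rfl⟩
  · simp [testHom_eq_zero_of_mem_rel1 hg]
  · refine Finset.sum_eq_zero fun T hT => ?_
    rw [map_mul, testHom_eq_zero_of_mem_rel2 hg (Finset.mem_filter.mp hT).2, mul_zero,
      Polynomial.coeff_zero]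
  · have hL' : L.card ≤ 2 * m := by simpa using Finset.card_le_univ L
    rw [Finset.sum_congr rfl fun T hT => by
      rw [map_mul, testHom_rel3_sum (by have := (Finset.mem_filter.mp hT).2; omega), mul_smul_comm,
        Polynomial.coeff_smul, Polynomial.coeff_mul_X_pow']]
    by_cases hℓ : L.card = m + 1
    · simp only [hℓ, add_tsub_cancel_right, le_refl, if_true, tsub_self, coeff_zero_testHom,
        nsmul_eq_mul, ← Finset.sum_mul, Nat.cast_pow, Nat.cast_ofNat]
      have h2 : (2 : ZMod 2) = 0 := rfl
      simp only [h2, zero_pow_eq, Finset.card_eq_zero]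
      rw [Finset.sum_boole, Finset.filter_filter, card_filter_card_lt_inter_eq_empty hℓ,
        Nat.cast_pow, Nat.cast_ofNat, h2, zero_pow (by omega), zero_mul]
    · simp [show ¬ L.card - 1 ≤ m by omega]

theorem coeffFunctional_two_X_none_sq : coeffFunctional 2 ((X none : PolyRing 2) ^ 2) = 1 := by
  simp [coeffFunctional_apply]
  decide

end CoeffFunctional

section Classes

variable {m : ℕ}

def rClass (m : ℕ) : LambdaRing m := Ideal.Quotient.mk (idealI m) (X none)

def vClass (i : Fin (2*m)) : LambdaRing m := Ideal.Quotient.mk (idealI m) (X (some i))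

def monomialClass (m d : ℕ) (S : Finset (Fin (2*m))) : LambdaRing m :=
  rClass m ^ (d - S.card) * ∏ i ∈ S, vClass i

theorem vClass_sq (i : Fin (2*m)) : vClass i ^ 2 = rClass m * vClass i := by
  simp only [vClass, rClass, ← map_pow, ← map_mul]
  refine Ideal.Quotient.eq.mpr ?_
  rw [CharTwo.sub_eq_add]
  exact Ideal.subset_span (Or.inl (Or.inl ⟨i, rfl⟩))

theorem vClass_pow_succ (i : Fin (2*m)) (k : ℕ) :
    vClass i ^ (k + 1) = rClass m ^ k * vClass i := by
  induction k with
  | zero => simp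
  | succ k ih => rw [pow_succ, ih, mul_assoc, ← sq, vClass_sq, ← mul_assoc, ← pow_succ]

theorem prod_vClass_eq_zero {S : Finset (Fin (2*m))} (hS : m ≤ S.card) :
    ∏ i ∈ S, vClass i = 0 := by
  simp only [vClass, ← map_prod]
  exact Ideal.Quotient.eq_zero_iff_mem.mpr (Ideal.subset_span (Or.inl (Or.inr ⟨S, hS, rfl⟩)))

theorem monomialClass_eq_zero {d : ℕ} {S : Finset (Fin (2*m))} (hS : m ≤ S.card) :
    monomialClass m d S = 0 := by
  rw [monomialClass, prod_vClass_eq_zero hS, mul_zero]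

theorem mk_monomial_one (f : Option (Fin (2*m)) →₀ ℕ) :
    Ideal.Quotient.mk (idealI m) (monomial f 1) = monomialClass m f.degree f.some.support := by
  have hpos : ∀ i ∈ f.some.support, 1 ≤ f.some i := fun i hi =>
    Nat.one_le_iff_ne_zero.mpr (Finsupp.mem_support_iff.mp hi)
  have hpow : ∀ i ∈ f.some.support,
      vClass i ^ f.some i = rClass m ^ (f.some i - 1) * vClass i :=
    fun i hi => by rw [← vClass_pow_succ, Nat.sub_add_cancel (hpos i hi)]
  have hcard : ∑ i ∈ f.some.support, (f.some i - 1) + f.some.support.card = f.some.degree := by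
    rw [Finset.card_eq_sum_ones, ← Finset.sum_add_distrib, Finsupp.degree_apply]
    exact Finset.sum_congr rfl fun i hi => Nat.sub_add_cancel (hpos i hi)
  have hdeg : f.degree = f none + f.some.degree :=
    Finsupp.sum_option_index f (fun _ e => e) (fun _ => rfl) (fun _ _ _ => rfl)
  rw [monomial_eq, C_1, one_mul,
    Finsupp.prod_option_index _ _ (fun _ => pow_zero _) (fun _ _ _ => pow_add _ _ _), map_mul,
    map_pow, Finsupp.prod, map_prod]
  simp only [map_pow]
  rw [← rClass, Finset.prod_congr rfl fun i hi => by rw [← vClass, hpow i hi],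
    Finset.prod_mul_distrib, Finset.prod_pow_eq_pow_sum, ← mul_assoc, ← pow_add, monomialClass]
  congr 2
  omega

theorem mk_eq_sum_vCoeff_smul {p : PolyRing m} {d : ℕ} (hp : p.IsHomogeneous d) :
    Ideal.Quotient.mk (idealI m) p =
      ∑ S with S.card < m, vCoeff p S • monomialClass m d S := by
  have hmono : ∀ f ∈ p.support, Ideal.Quotient.mk (idealI m) (monomial f (coeff f p)) =
      coeff f p • monomialClass m d f.some.support := by
    intro f hf
    have hsmul : monomial f (coeff f p) = coeff f p • monomial f (1 : ZMod 2) := by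
      rw [smul_monomial, smul_eq_mul, mul_one]
    rw [hsmul, ← Ideal.Quotient.mkₐ_eq_mk (ZMod 2), map_smul, Ideal.Quotient.mkₐ_eq_mk,
      mk_monomial_one, Finsupp.degree_apply, ← hp.degree_eq_sum_deg_support hf]
  conv_lhs => rw [p.as_sum]
  rw [map_sum, Finset.sum_congr rfl hmono, ← Finset.sum_fiberwise _ (fun f => f.some.support),
    Finset.sum_filter_of_ne fun S _ h =>
      not_le.mp fun hS => h (by rw [monomialClass_eq_zero hS, smul_zero])]
  refine Finset.sum_congr rfl fun S _ => ?_
  rw [vCoeff, Finset.sum_smul]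
  exact Finset.sum_congr rfl fun f hf => by rw [(Finset.mem_filter.mp hf).2]

theorem rClass_sq_mul_monomialClass {d : ℕ} {S : Finset (Fin (2*m))} (hS : S.card ≤ d) :
    rClass m ^ 2 * monomialClass m d S = monomialClass m (d + 2) S := by
  rw [monomialClass, monomialClass, ← mul_assoc, ← pow_add]
  congr 2
  omega

theorem mem_lambdaComp_iff {d : ℕ} {x : LambdaRing m} :
    x ∈ LambdaComp m d ↔
      ∃ p : PolyRing m, p.IsHomogeneous d ∧ Ideal.Quotient.mk (idealI m) p = x := by
  simp [LambdaComp, mem_homogeneousSubmodule]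

theorem monomialClass_mem_lambdaComp {d : ℕ} {S : Finset (Fin (2*m))} (hS : S.card ≤ d) :
    monomialClass m d S ∈ LambdaComp m d := by
  refine mem_lambdaComp_iff.mpr ⟨X none ^ (d - S.card) * ∏ i ∈ S, X (some i), ?_, ?_⟩
  · convert (isHomogeneous_X_pow _ _).mul
      (IsHomogeneous.prod S _ (fun _ => 1) fun i _ => isHomogeneous_X (ZMod 2) (some i))
    simp
    omega
  · simp [monomialClass, rClass, vClass]

theorem mulR2_apply (x : LambdaRing m) : mulR2 m x = rClass m ^ 2 * x := by
  simp [mulR2, rClass]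

end Classes

theorem mk_eq_zero_of_rClass_sq_mul_eq_zero {m q : ℕ} {p : PolyRing m} (hp : p.IsHomogeneous q)
    (hq : q + 2 < m) (h : rClass m ^ 2 * Ideal.Quotient.mk (idealI m) p = 0) :
    Ideal.Quotient.mk (idealI m) p = 0 := by
  have hmem : (X none : PolyRing m) ^ 2 * p ∈ idealI m := by
    rw [← Ideal.Quotient.eq_zero_iff_mem, map_mul, map_pow]
    exact h
  have hsum : ∀ T : Finset (Fin (2*m)), T.card < m → ∑ S ∈ T.powerset, vCoeff p S = 0 := by
    intro T hT
    have hdvd :=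
      Ideal.mem_span_singleton.mp (Ideal.mem_comap.mp (idealI_le_comap_testHom hT hmem))
    rw [map_mul, map_pow, testHom_X_none, testHom_of_isHomogeneous T hp, mul_left_comm,
      ← pow_add, Polynomial.X_pow_dvd_iff] at hdvd
    have hcoeff := hdvd (2 + q) (by omega)
    rwa [Polynomial.coeff_C_mul_X_pow, if_pos rfl, eval_testPoint] at hcoeff
  rw [mk_eq_sum_vCoeff_smul hp]
  refine Finset.sum_eq_zero fun S hS => ?_
  rw [Finset.eq_zero_of_sum_powerset_eq_zero hsum S (Finset.mem_filter.mp hS).2, zero_smul]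

theorem rClass_two_sq_ne_zero : rClass 2 ^ 2 ≠ 0 := by
  intro h
  have hmem : (X none : PolyRing 2) ^ 2 ∈ idealI 2 := by
    rw [← Ideal.Quotient.eq_zero_iff_mem, map_pow]
    exact h
  have hone := coeffFunctional_two_X_none_sq
  rw [LinearMap.map_eq_zero_of_mem_ideal_span _
    (fun a _ hg => coeffFunctional_mul_eq_zero le_rfl a hg) hmem] at hone
  exact zero_ne_one hone

theorem mk_eq_zero_of_rClass_two_sq_mul_eq_zero {p : PolyRing 2} (hp : p.IsHomogeneous 0)
    (h : rClass 2 ^ 2 * Ideal.Quotient.mk (idealI 2) p = 0) :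
    Ideal.Quotient.mk (idealI 2) p = 0 := by
  obtain ⟨c, rfl⟩ : ∃ c, p = C c :=
    ⟨_, totalDegree_eq_zero_iff_eq_C.mp (Nat.le_zero.mp hp.totalDegree_le)⟩
  have hC : Ideal.Quotient.mk (idealI 2) (C c) = c • 1 := by
    rw [C_eq_smul_one, ← Ideal.Quotient.mkₐ_eq_mk (ZMod 2), map_smul, map_one]
  rw [hC, mul_smul_comm, mul_one, smul_eq_zero] at h
  rw [hC, h.resolve_right rClass_two_sq_ne_zero, zero_smul]

theorem exists_mulR2_eq {m q : ℕ} (hq : m - 1 ≤ q) {y : LambdaRing m}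
    (hy : y ∈ LambdaComp m (q + 2)) :
    ∃ x ∈ LambdaComp m q, mulR2 m x = y := by
  obtain ⟨p, hp, rfl⟩ := mem_lambdaComp_iff.mp hy
  refine ⟨∑ S with S.card < m, vCoeff p S • monomialClass m q S,
    Submodule.sum_mem _ fun S hS => Submodule.smul_mem _ _ (monomialClass_mem_lambdaComp ?_), ?_⟩
  · have := (Finset.mem_filter.mp hS).2
    omega
  rw [mulR2_apply, mk_eq_sum_vCoeff_smul hp, Finset.mul_sum]
  refine Finset.sum_congr rfl fun S hS => ?_
  have := (Finset.mem_filter.mp hS).2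
  rw [mul_smul_comm, rClass_sq_mul_monomialClass (by omega)]

end LambdaRing

/-- The `ℤ/2`-linear map `Λ_n^q → Λ_n^{q+2}`, `x ↦ R²·x`, is injective for `0 ≤ q ≤ m-3`
and surjective for `m-1 ≤ q ≤ 2m-4`. -/
theorem statement8 (m : ℕ) (hm : 2 ≤ m) :
    (∀ q ≤ m - 3, ∀ x ∈ LambdaComp m q, mulR2 m x = 0 → x = 0) ∧
    (∀ q, m - 1 ≤ q → q ≤ 2*m - 4 →
      ∀ y ∈ LambdaComp m (q+2), ∃ x ∈ LambdaComp m q, mulR2 m x = y) := by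
  refine ⟨fun q hq x hx hx0 => ?_, fun q hq _ y hy => LambdaRing.exists_mulR2_eq hq hy⟩
  obtain ⟨p, hp, rfl⟩ := LambdaRing.mem_lambdaComp_iff.mp hx
  rw [LambdaRing.mulR2_apply] at hx0
  by_cases hqm : q + 2 < m
  · exact LambdaRing.mk_eq_zero_of_rClass_sq_mul_eq_zero hp hqm hx0
  · -- `m - 3` truncates to `0`, so at `m = 2` the claim is injectivity in degree `0`.
    obtain rfl : m = 2 := by omega
    obtain rfl : q = 0 := by omega
    exact LambdaRing.mk_eq_zero_of_rClass_two_sq_mul_eq_zero hp hx0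

end
end

section
/- Let P be an N×N integer matrix with P² = I. Then there exist nonnegative integers x, y, z with 2x + y + z = N and a matrix S ∈ GL(N, ℤ) such that S⁻¹PS = F(x, y, z). -/
open CategoryTheory AlgebraicTopology Finset

noncomputable section

/-- The block-diagonal integer matrix `F(x,y,z)` consisting of `x` copies of the block
`[[0,1],[1,0]]`, followed by `y` copies of `[1]` and `z` copies of `[-1]`. -/
def Fmat (x y z : ℕ) : Matrix (Fin (2*x+y+z)) (Fin (2*x+y+z)) ℤ :=
  Matrix.of fun i j =>
    if (i : ℕ) < 2*x then (if (j : ℕ) = 2*((i : ℕ)/2) + (1 - (i : ℕ) % 2) then 1 else 0)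
    else if j = i then (if (i : ℕ) < 2*x + y then 1 else -1) else 0

/-!
Let `f` be an involution of a lattice `M` and `L = ker (f + 1)`. The map `f + 1` sends `M` onto a
lattice `Q` with kernel `L`; for a section `s` of it, `β = (f - 1) ∘ s` takes values in `L` and
`f (s q) = s q + β q`. A Smith normal form of `range β ⊆ L`, together with a splitting of `β`
onto its range, yields a basis of `M` consisting of vectors `l` with `f l = -l`, vectors fixed by
`f`, and vectors `c i` with `f (c i) = c i + a i • l i`.

Over `ℤ`, replacing `c i` by `c i + (a i / 2) • l i` replaces `a i` by `a i % 2`. For odd `a i`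
the vectors `c i` and `c i + l i` are exchanged by `f`; for even `a i` they are eigenvectors for
`1` and `-1`. This is the basis in which `f` has matrix `F(x, y, z)`.
-/

theorem Module.Basis.exists_coe_eq_of_card_eq_of_mem_span {R M ι κ : Type*} [Semiring R]
    [Nontrivial R] [OrzechProperty R] [AddCommMonoid M] [Module R M] [Fintype ι] [Fintype κ]
    (b : Basis ι R M) (v : κ → M) (hcard : Fintype.card κ = Fintype.card ι)
    (hspan : ∀ i, b i ∈ Submodule.span R (Set.range v)) :
    ∃ b' : Basis κ R M, ⇑b' = v := by
  have le_span : ⊤ ≤ Submodule.span R (Set.range v) := by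
    rw [← b.span_eq, Submodule.span_le]
    rintro _ ⟨i, rfl⟩
    exact hspan i
  exact ⟨basisOfTopLeSpanOfCardEqFinrank v le_span (hcard.trans (finrank_eq_card_basis b).symm),
    coe_basisOfTopLeSpanOfCardEqFinrank _ _ _⟩

theorem LinearMap.exists_basis_sum_of_comp_eq_id {R M N κ ν : Type*} [Ring R] [AddCommGroup M]
    [Module R M] [AddCommGroup N] [Module R N] {g : M →ₗ[R] N} {s : N →ₗ[R] M}
    (hs : g ∘ₗ s = LinearMap.id) (bK : Module.Basis κ R (LinearMap.ker g))
    (bN : Module.Basis ν R N) :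
    ∃ b : Module.Basis (κ ⊕ ν) R M, (∀ k, b (.inl k) = bK k) ∧ ∀ n, b (.inr n) = s (bN n) := by
  have hgs (n : N) : g (s n) = n := LinearMap.congr_fun hs n
  let e : (LinearMap.ker g × N) ≃ₗ[R] M := LinearEquiv.ofLinearMap
    ((LinearMap.ker g).subtype.coprod s)
    (((LinearMap.id - s ∘ₗ g).codRestrict (LinearMap.ker g) fun v => by simp [hgs]).prod g)
    (by ext; simp) (by ext <;> simp [hgs])
  exact ⟨(bK.prod bN).map e, fun k => by simp [e], fun n => by simp [e]⟩

structure IsTriangularBasis {R M ρ ω κ : Type*} [Ring R] [AddCommGroup M] [Module R M]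
    (f : M →ₗ[R] M) (b : Module.Basis ((ρ ⊕ ω) ⊕ (κ ⊕ ρ)) R M) (a : ρ → R) : Prop where
  apply_inl : ∀ j, f (b (.inl j)) = -b (.inl j)
  apply_inr_inl : ∀ k, f (b (.inr (.inl k))) = b (.inr (.inl k))
  apply_inr_inr : ∀ i, f (b (.inr (.inr i))) = b (.inr (.inr i)) + a i • b (.inl (.inl i))

theorem Function.Involutive.exists_basis_triangular {R M : Type*} [CommRing R] [IsDomain R]
    [IsPrincipalIdealRing R] [AddCommGroup M] [Module R M] [Module.Free R M] [Module.Finite R M]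
    {f : M →ₗ[R] M} (hf : Function.Involutive f) :
    ∃ (r w p : ℕ) (a : Fin r → R) (b : Module.Basis ((Fin r ⊕ Fin w) ⊕ (Fin p ⊕ Fin r)) R M),
      IsTriangularBasis f b a := by
  let g := (f + LinearMap.id).rangeRestrict
  have mem_ker_g (v : M) : v ∈ LinearMap.ker g ↔ f v = -v := by
    simp [g, add_eq_zero_iff_eq_neg]
  obtain ⟨s, hs⟩ := Module.projective_lifting_property g LinearMap.id
    (LinearMap.surjective_rangeRestrict _)
  let β := (f - LinearMap.id) ∘ₗ s
  have hβ (q) : f (s q) = s q + β q := by simp [β]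
  have range_β_le : LinearMap.range β ≤ LinearMap.ker g := by
    rintro _ ⟨q, rfl⟩
    rw [mem_ker_g]
    simp [β, hf (s q)]
  obtain ⟨r, o, hro, bL, bR, a, hsnf⟩ :=
    Submodule.exists_smith_normal_form_of_le (Module.Free.chooseBasis R M) _ _ range_β_le
  have : Module.Projective R (LinearMap.range β) := .of_basis bR
  obtain ⟨ρ, hρ⟩ := Module.projective_lifting_property β.rangeRestrict LinearMap.id
    (LinearMap.surjective_rangeRestrict _)
  let bK := Module.finBasis R ↥(LinearMap.ker β.rangeRestrict)
  obtain ⟨bQ, hbQK, hbQR⟩ := LinearMap.exists_basis_sum_of_comp_eq_id hρ bK bR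
  let e : Fin r ⊕ Fin (o - r) ≃ Fin o := finSumFinEquiv.trans (finCongr (by omega))
  obtain ⟨b, hbL, hbQ⟩ := LinearMap.exists_basis_sum_of_comp_eq_id hs (bL.reindex e.symm) bQ
  refine ⟨r, o - r, _, a, b, ⟨fun j => ?_, fun k => ?_, fun i => ?_⟩⟩
  · rw [hbL]
    exact (mem_ker_g _).1 (Subtype.mem _)
  · have hk : β (bK k) = 0 := congrArg Subtype.val (LinearMap.mem_ker.1 (bK k).2)
    rw [hbQ, hβ, hbQK, hk, add_zero]
  · have hβρ : β (bQ (.inr i)) = bR i := by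
      rw [hbQR]
      exact congrArg Subtype.val (LinearMap.congr_fun hρ (bR i))
    rw [hbQ, hβ, hβρ, hsnf, hbL, Module.Basis.reindex_apply]
    congr 3

/-- Exchanges `(a, 0)` and `(a, 1)`: the index type `(α × Fin 2 ⊕ β) ⊕ γ` lists the basis of
`F(x, y, z)` as swapped pairs, then `+1`- and then `-1`-eigenvectors. -/
def pairSwap (α β γ : Type*) : Equiv.Perm ((α × Fin 2 ⊕ β) ⊕ γ) :=
  (((Equiv.refl α).prodCongr (Equiv.swap 0 1)).sumCongr (Equiv.refl β)).sumCongr (Equiv.refl γ)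

def pairSign {α β γ : Type*} : (α × Fin 2 ⊕ β) ⊕ γ → ℤ :=
  Sum.elim (fun _ => 1) (fun _ => -1)

/-- Sends `(a, t)` to `2 * a + t`, as in the block layout of `Fmat`. -/
def pairIndexEquivFin (x y z : ℕ) : (Fin x × Fin 2 ⊕ Fin y) ⊕ Fin z ≃ Fin (2 * x + y + z) :=
  ((((finProdFinEquiv.trans (finCongr (mul_comm x 2))).sumCongr (Equiv.refl _)).trans
    finSumFinEquiv).sumCongr (Equiv.refl _)).trans finSumFinEquiv

theorem Fmat_apply_pairIndexEquivFin (x y z : ℕ) (u w : (Fin x × Fin 2 ⊕ Fin y) ⊕ Fin z) :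
    Fmat x y z (pairIndexEquivFin x y z u) (pairIndexEquivFin x y z w) =
      if u = pairSwap _ _ _ w then pairSign w else 0 := by
  have swap_val (t : Fin 2) : ((Equiv.swap 0 1 t : Fin 2) : ℕ) = 1 - t := by fin_cases t <;> rfl
  rcases u with ((⟨a, t⟩ | k) | k) <;> rcases w with ((⟨a', t'⟩ | k') | k') <;>
    simp [Fmat, pairIndexEquivFin, pairSwap, pairSign, Fin.ext_iff, swap_val] <;>
    (try split_ifs) <;> omega

theorem LinearMap.toMatrix_eq_of_apply_eq_smul {R M ι : Type*} [CommSemiring R] [AddCommMonoid M]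
    [Module R M] [Fintype ι] [DecidableEq ι] (b : Module.Basis ι R M) {f : M →ₗ[R] M}
    {τ : ι → ι} {c : ι → R} (h : ∀ j, f (b j) = c j • b (τ j)) :
    LinearMap.toMatrix b b f = Matrix.of fun i j => if i = τ j then c j else 0 := by
  ext i j
  rw [LinearMap.toMatrix_apply, h, map_smul, b.repr_self, Finsupp.smul_apply, Finsupp.single_apply]
  simp [eq_comm]

theorem exists_basis_toMatrix_eq_Fmat_of_pairSwap {M : Type*} [AddCommGroup M]
    {f : M →ₗ[ℤ] M} {α β γ : Type*} [Fintype α] [Fintype β] [Fintype γ]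
    (b : Module.Basis ((α × Fin 2 ⊕ β) ⊕ γ) ℤ M)
    (hb : ∀ w, f (b w) = pairSign w • b (pairSwap α β γ w)) :
    ∃ (x y z : ℕ) (b' : Module.Basis (Fin (2 * x + y + z)) ℤ M),
      LinearMap.toMatrix b' b' f = Fmat x y z := by
  classical
  let E : (α × Fin 2 ⊕ β) ⊕ γ ≃ (Fin _ × Fin 2 ⊕ Fin _) ⊕ Fin _ :=
    (((Fintype.equivFin α).prodCongr (Equiv.refl _)).sumCongr (Fintype.equivFin β)).sumCongr
      (Fintype.equivFin γ)
  have hE (w) : E (pairSwap α β γ w) = pairSwap _ _ _ (E w) := by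
    rcases w with ((⟨a, t⟩ | k) | k) <;> rfl
  have hE_sign (w) : pairSign (E w) = pairSign w := by
    rcases w with ((⟨a, t⟩ | k) | k) <;> rfl
  let e := E.trans (pairIndexEquivFin _ _ _)
  refine ⟨_, _, _, b.reindex e, ?_⟩
  rw [LinearMap.toMatrix_eq_of_apply_eq_smul (b.reindex e) (τ := e ∘ pairSwap α β γ ∘ e.symm)
    (c := pairSign ∘ e.symm) (fun j => by simp [hb])]
  ext κ κ'
  obtain ⟨u, rfl⟩ := e.surjective κ
  obtain ⟨w, rfl⟩ := e.surjective κ'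
  simp [e, Fmat_apply_pairIndexEquivFin, hE, hE_sign]

theorem exists_basis_triangular_emod_two {M : Type*} [AddCommGroup M] {f : M →ₗ[ℤ] M}
    {ρ ω κ : Type*} [Fintype ρ] [Fintype ω] [Fintype κ]
    {b : Module.Basis ((ρ ⊕ ω) ⊕ (κ ⊕ ρ)) ℤ M} {a : ρ → ℤ} (hb : IsTriangularBasis f b a) :
    ∃ b' : Module.Basis ((ρ ⊕ ω) ⊕ (κ ⊕ ρ)) ℤ M, IsTriangularBasis f b' (a · % 2) := by
  let v : (ρ ⊕ ω) ⊕ (κ ⊕ ρ) → M := Sum.elim (fun j => b (.inl j)) (Sum.elim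
    (fun k => b (.inr (.inl k))) (fun i => b (.inr (.inr i)) + (a i / 2) • b (.inl (.inl i))))
  have hspan (j) : b j ∈ Submodule.span ℤ (Set.range v) := by
    rcases j with (j | k | i)
    · exact Submodule.subset_span ⟨.inl j, rfl⟩
    · exact Submodule.subset_span ⟨.inr (.inl k), rfl⟩
    · have : b (.inr (.inr i)) = v (.inr (.inr i)) - (a i / 2) • v (.inl (.inl i)) := by simp [v]
      rw [this]
      exact Submodule.sub_mem _ (Submodule.subset_span ⟨_, rfl⟩)
        (Submodule.smul_mem _ _ (Submodule.subset_span ⟨_, rfl⟩))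
  obtain ⟨b', hb'⟩ := b.exists_coe_eq_of_card_eq_of_mem_span v rfl hspan
  refine ⟨b', ⟨fun j => by simp [hb', v, hb.apply_inl], fun k => by simp [hb', v, hb.apply_inr_inl],
    fun i => ?_⟩⟩
  simp only [hb', v, Sum.elim_inr, Sum.elim_inl, map_add, map_zsmul, hb.apply_inr_inr,
    hb.apply_inl]
  linear_combination (norm := module) -(Int.emod_add_mul_ediv (a i) 2 • b (.inl (.inl i)))

theorem exists_basis_toMatrix_eq_Fmat_of_triangular {M : Type*} [AddCommGroup M]
    {f : M →ₗ[ℤ] M} {ρ ω κ : Type*} [Fintype ρ] [Fintype ω] [Fintype κ]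
    {b : Module.Basis ((ρ ⊕ ω) ⊕ (κ ⊕ ρ)) ℤ M} {ε : ρ → ℤ} (hb : IsTriangularBasis f b ε)
    (hε : ∀ i, ε i = 0 ∨ ε i = 1) :
    ∃ (x y z : ℕ) (b' : Module.Basis (Fin (2 * x + y + z)) ℤ M),
      LinearMap.toMatrix b' b' f = Fmat x y z := by
  classical
  let l i := b (.inl (.inl i))
  let c i := b (.inr (.inr i))
  let O := {i // ε i = 1}
  let E := {i // ¬ε i = 1}
  let v : (O × Fin 2 ⊕ (κ ⊕ E)) ⊕ (E ⊕ ω) → M :=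
    Sum.elim (Sum.elim (fun p => c p.1 + (p.2 : ℤ) • l p.1)
      (Sum.elim (fun k => b (.inr (.inl k))) (fun e => c e)))
      (Sum.elim (fun e => l e) (fun w => b (.inl (.inr w))))
  have mem_span (i : ρ) : l i ∈ Submodule.span ℤ (Set.range v) ∧
      c i ∈ Submodule.span ℤ (Set.range v) := by
    by_cases hi : ε i = 1
    · have h0 : c i = v (.inl (.inl (⟨i, hi⟩, 0))) := by simp [v]
      have h1 : l i = v (.inl (.inl (⟨i, hi⟩, 1))) - v (.inl (.inl (⟨i, hi⟩, 0))) := by simp [v]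
      rw [h0, h1]
      exact ⟨Submodule.sub_mem _ (Submodule.subset_span ⟨_, rfl⟩) (Submodule.subset_span ⟨_, rfl⟩),
        Submodule.subset_span ⟨_, rfl⟩⟩
    · exact ⟨Submodule.subset_span ⟨.inr (.inl ⟨i, hi⟩), rfl⟩,
        Submodule.subset_span ⟨.inl (.inr (.inr ⟨i, hi⟩)), rfl⟩⟩
  have hspan (j) : b j ∈ Submodule.span ℤ (Set.range v) := by
    rcases j with ((i | w) | (k | i))
    · exact (mem_span i).1
    · exact Submodule.subset_span ⟨.inr (.inr w), rfl⟩
    · exact Submodule.subset_span ⟨.inl (.inr (.inl k)), rfl⟩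
    · exact (mem_span i).2
  have hcard : Fintype.card ((O × Fin 2 ⊕ (κ ⊕ E)) ⊕ (E ⊕ ω)) =
      Fintype.card ((ρ ⊕ ω) ⊕ (κ ⊕ ρ)) := by
    have := Fintype.card_subtype_compl (fun i => ε i = 1)
    have := Fintype.card_subtype_le (fun i => ε i = 1)
    simp only [O, E, Fintype.card_sum, Fintype.card_prod, Fintype.card_fin]
    omega
  obtain ⟨b', hb'⟩ := b.exists_coe_eq_of_card_eq_of_mem_span v hcard hspan
  refine exists_basis_toMatrix_eq_Fmat_of_pairSwap b' fun w => ?_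
  rw [hb']
  rcases w with ((⟨⟨i, hi⟩, t⟩ | k | ⟨i, hi⟩) | ⟨i, hi⟩ | w)
  · fin_cases t <;> simp [v, pairSign, pairSwap, c, hb.apply_inr_inr, hi, l, hb.apply_inl]
  · simp [v, pairSign, pairSwap, hb.apply_inr_inl]
  · simp [v, pairSign, pairSwap, c, hb.apply_inr_inr, (hε i).resolve_right hi]
  · simp [v, pairSign, pairSwap, l, hb.apply_inl]
  · simp [v, pairSign, pairSwap, hb.apply_inl]

theorem Function.Involutive.exists_basis_toMatrix_eq_Fmat {M : Type*} [AddCommGroup M]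
    [Module.Free ℤ M] [Module.Finite ℤ M] {f : M →ₗ[ℤ] M} (hf : Function.Involutive f) :
    ∃ (x y z : ℕ) (b : Module.Basis (Fin (2 * x + y + z)) ℤ M),
      LinearMap.toMatrix b b f = Fmat x y z := by
  obtain ⟨r, w, p, a, b, hb⟩ := hf.exists_basis_triangular
  obtain ⟨b', hb'⟩ := exists_basis_triangular_emod_two hb
  exact exists_basis_toMatrix_eq_Fmat_of_triangular hb' fun i => Int.emod_two_eq_zero_or_one _

theorem Matrix.exists_units_conj_eq_toMatrix_toLin' {R n : Type*} [CommRing R] [Fintype n]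
    [DecidableEq n] (P : Matrix n n R) (b : Module.Basis n R (n → R)) :
    ∃ S : (Matrix n n R)ˣ, (↑S⁻¹ : Matrix n n R) * P * (↑S : Matrix n n R) =
      LinearMap.toMatrix b b (Matrix.toLin' P) := by
  let e := Pi.basisFun R n
  refine ⟨⟨e.toMatrix b, b.toMatrix e, e.toMatrix_mul_toMatrix_flip b,
    b.toMatrix_mul_toMatrix_flip e⟩, ?_⟩
  rw [← basis_toMatrix_mul_linearMap_toMatrix_mul_basis_toMatrix b e b e]
  simp [e]

/-- **Lemma 8 (i).** Every integer square matrix `P` with `P² = I` is integrally similar to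
`F(x, y, z)` for some nonnegative integers `x, y, z`. -/
theorem statement12 (N : ℕ) (P : Matrix (Fin N) (Fin N) ℤ) (hP : P * P = 1) :
    ∃ (x y z : ℕ) (h : 2*x + y + z = N) (S : (Matrix (Fin N) (Fin N) ℤ)ˣ),
      (↑S⁻¹ : Matrix (Fin N) (Fin N) ℤ) * P * (↑S : Matrix (Fin N) (Fin N) ℤ)
        = Matrix.reindex (finCongr h) (finCongr h) (Fmat x y z) := by
  have hinv : Function.Involutive (Matrix.toLin' P) := fun v => by
    rw [← LinearMap.comp_apply, ← Matrix.toLin'_mul, hP, Matrix.toLin'_one, LinearMap.id_apply]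
  obtain ⟨x, y, z, b, hb⟩ := hinv.exists_basis_toMatrix_eq_Fmat
  obtain rfl : 2 * x + y + z = N := by
    simpa using Fintype.card_congr (b.indexEquiv (Pi.basisFun ℤ (Fin N)))
  obtain ⟨S, hS⟩ := Matrix.exists_units_conj_eq_toMatrix_toLin' P b
  exact ⟨x, y, z, rfl, S, by simpa [hb] using hS⟩

end
end

section
/- Let x, y, z and p, q, r be nonnegative integers with 2x + y + z = 2p + q + r = N. If there exists S ∈ GL(N, ℤ) with S⁻¹·F(x,y,z)·S = F(p,q,r), then (x, y, z) = (p, q, r). -/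
open CategoryTheory AlgebraicTopology Finset

noncomputable section

/-! Over `ℚ` the matrices `F(x,y,z)` are not determined by their similarity class
(`F(1,0,0)` and `F(0,1,1)` are both diagonalisable with eigenvalues `1, -1`), so `x` has to be
read off modulo `2`. There `F + 1` vanishes outside the swap blocks and is the all-ones `2 × 2`
block on each of them, so `rank_{𝔽₂}(F + 1) = x`; this rank is unchanged by conjugation with the
reduction of `S`. The trace `y - z` and the size `2x + y + z` then determine `y` and `z`. -/

namespace Matrix

theorem trace_reindex {m n R : Type*} [Fintype m] [Fintype n] [AddCommMonoid R] (e : m ≃ n)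
    (A : Matrix m m R) : trace (reindex e e A) = trace A :=
  e.symm.sum_comp fun i => A i i

theorem rank_units_conj' {n R : Type*} [Fintype n] [DecidableEq n] [CommRing R]
    (S : (Matrix n n R)ˣ) (A : Matrix n n R) :
    ((↑S⁻¹ : Matrix n n R) * A * (↑S : Matrix n n R)).rank = A.rank := by
  rw [rank_mul_eq_left_of_isUnit_det _ _ (isUnits_det_units S),
    rank_mul_eq_right_of_isUnit_det _ _ (isUnits_det_units S⁻¹)]

theorem rank_mul_eq_card_of_mul_eq_one {l m n R : Type*} [Fintype l] [Fintype m] [Fintype n]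
    [DecidableEq m] [CommSemiring R] [StrongRankCondition R]
    {A : Matrix l m R} {B : Matrix m n R} {A' : Matrix m l R} {B' : Matrix n m R}
    (hA : A' * A = 1) (hB : B * B' = 1) : (A * B).rank = Fintype.card m := by
  refine le_antisymm ((rank_mul_le_left A B).trans (rank_le_card_width A)) ?_
  calc Fintype.card m = (A' * (A * B) * B').rank := by
        rw [← Matrix.mul_assoc, hA, Matrix.one_mul, hB, rank_one]
    _ ≤ (A * B).rank := (rank_mul_le_left _ _).trans (rank_mul_le_right _ _)

theorem rank_map_add_one_reindex {m n R K : Type*} [Fintype m] [Fintype n] [DecidableEq m]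
    [DecidableEq n] [Semiring R] [CommSemiring K] (f : R →+* K) (e : m ≃ n) (A : Matrix m m R) :
    ((reindex e e A).map f + 1).rank = (A.map f + 1).rank := by
  rw [← rank_reindex e e (A.map f + 1)]
  simp [reindex_apply, submatrix_map, submatrix_add, submatrix_one_equiv]

theorem rank_map_add_one_units_conj' {n R K : Type*} [Fintype n] [DecidableEq n] [Semiring R]
    [CommRing K] (f : R →+* K) (S : (Matrix n n R)ˣ) (A : Matrix n n R) :
    (((↑S⁻¹ : Matrix n n R) * A * (↑S : Matrix n n R)).map f + 1).rank = (A.map f + 1).rank := by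
  have hconj : (↑S⁻¹ : Matrix n n R) * A * (↑S : Matrix n n R) + 1 =
      (↑S⁻¹ : Matrix n n R) * (A + 1) * (↑S : Matrix n n R) := by
    rw [Matrix.mul_add, Matrix.add_mul, Matrix.mul_one, Units.inv_mul]
  have hmap (B : Matrix n n R) : B.map f + 1 = f.mapMatrix (B + 1) := by
    rw [map_add, map_one, RingHom.mapMatrix_apply]
  let T := Units.map f.mapMatrix.toMonoidHom S
  have hT : (↑T : Matrix n n K) = f.mapMatrix ↑S := rfl
  have hT_inv : (↑T⁻¹ : Matrix n n K) = f.mapMatrix ↑S⁻¹ := rfl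
  rw [hmap, hmap, hconj, map_mul, map_mul, ← hT, ← hT_inv, rank_units_conj']

end Matrix

open Matrix

theorem Fmat_apply_self (x y z : ℕ) (i : Fin (2*x+y+z)) :
    Fmat x y z i i = if (i : ℕ) < 2*x then 0 else if (i : ℕ) < 2*x + y then 1 else -1 := by
  simp only [Fmat, of_apply, if_true]
  split_ifs <;> omega

theorem trace_Fmat (x y z : ℕ) : (Fmat x y z).trace = y - z := by
  let d : ℕ → ℤ := fun i => if i < 2*x then 0 else if i < 2*x + y then 1 else -1
  calc (Fmat x y z).trace = ∑ i ∈ range (2*x), d i + ∑ i ∈ range y, d (2*x + i)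
        + ∑ i ∈ range z, d (2*x + y + i) := by
        rw [← Finset.sum_range_add, ← Finset.sum_range_add, ← Fin.sum_univ_eq_sum_range]
        exact Finset.sum_congr rfl fun i _ => Fmat_apply_self x y z i
    _ = ∑ _i ∈ range (2*x), (0 : ℤ) + ∑ _i ∈ range y, 1 + ∑ _i ∈ range z, -1 := by
        congr 1; congr 1
        all_goals
          refine Finset.sum_congr rfl fun i hi => ?_
          rw [mem_range] at hi
          simp only [d]
          split_ifs <;> omega
    _ = y - z := by simp [sub_eq_add_neg]

def swapBlockIndicator (x n : ℕ) : Matrix (Fin x) (Fin n) (ZMod 2) :=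
  of fun k j => if (j : ℕ) / 2 = k then 1 else 0

def evenSelector (x n : ℕ) : Matrix (Fin n) (Fin x) (ZMod 2) :=
  of fun j k => if (j : ℕ) = 2 * k then 1 else 0

theorem swapBlockIndicator_mul_evenSelector {x n : ℕ} (h : 2 * x ≤ n) :
    swapBlockIndicator x n * evenSelector x n = 1 := by
  ext k l
  simp only [swapBlockIndicator, evenSelector, mul_apply, of_apply, mul_ite, mul_one, mul_zero]
  rw [Finset.sum_eq_single_of_mem (⟨2 * l, by omega⟩ : Fin n) (mem_univ _)
    fun j _ hj => if_neg fun hjl => hj (Fin.ext hjl)]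
  simp [one_apply, Fin.ext_iff, eq_comm]

theorem transpose_swapBlockIndicator_mul_self_apply {x n : ℕ} (i j : Fin n) :
    ((swapBlockIndicator x n)ᵀ * swapBlockIndicator x n) i j =
      if (i : ℕ) / 2 < x ∧ (i : ℕ) / 2 = (j : ℕ) / 2 then 1 else 0 := by
  simp only [swapBlockIndicator, mul_apply, transpose_apply, of_apply, mul_ite, ite_mul, one_mul,
    zero_mul, mul_zero]
  split_ifs with hij
  · rw [Finset.sum_eq_single_of_mem (⟨(i : ℕ) / 2, hij.1⟩ : Fin x) (mem_univ _)]
    · simp [hij.2]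
    · intro k _ hk
      split_ifs <;> first | rfl | exact absurd (Fin.ext (by simp only; omega)) hk
  · refine Finset.sum_eq_zero fun k _ => ?_
    split_ifs <;> first | rfl | omega

theorem Fmat_map_zmod_two_add_one (x y z : ℕ) :
    (Fmat x y z).map (Int.castRingHom (ZMod 2)) + 1 =
      (swapBlockIndicator x _)ᵀ * swapBlockIndicator x _ := by
  ext i j
  rw [transpose_swapBlockIndicator_mul_self_apply]
  simp only [Matrix.add_apply, map_apply, Fmat, of_apply, one_apply, Fin.ext_iff]
  split_ifs <;> first | omega | rfl

theorem rank_Fmat_map_zmod_two_add_one (x y z : ℕ) :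
    ((Fmat x y z).map (Int.castRingHom (ZMod 2)) + 1).rank = x := by
  have hsection := swapBlockIndicator_mul_evenSelector (x := x) (n := 2*x+y+z) (by omega)
  rw [Fmat_map_zmod_two_add_one, rank_mul_eq_card_of_mul_eq_one (A' := (evenSelector x _)ᵀ)
    (by rw [← transpose_mul, hsection, transpose_one]) hsection, Fintype.card_fin]

/-- **Lemma 8 (ii).** If `F(x,y,z)` and `F(p,q,r)` are integrally similar then
`(x, y, z) = (p, q, r)`. -/
theorem statement13 (x y z p q r N : ℕ) (hxyz : 2*x + y + z = N) (hpqr : 2*p + q + r = N)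
    (S : (Matrix (Fin N) (Fin N) ℤ)ˣ)
    (h : (↑S⁻¹ : Matrix (Fin N) (Fin N) ℤ) *
        (Matrix.reindex (finCongr hxyz) (finCongr hxyz) (Fmat x y z)) *
        (↑S : Matrix (Fin N) (Fin N) ℤ)
      = Matrix.reindex (finCongr hpqr) (finCongr hpqr) (Fmat p q r)) :
    (x, y, z) = (p, q, r) := by
  have htrace : (y : ℤ) - z = q - r := by
    rw [← trace_Fmat, ← trace_Fmat, ← trace_reindex (finCongr hxyz),
      ← trace_reindex (finCongr hpqr), ← h, trace_units_conj']
  have hrank : x = p := by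
    rw [← rank_Fmat_map_zmod_two_add_one x y z, ← rank_Fmat_map_zmod_two_add_one p q r,
      ← rank_map_add_one_reindex _ (finCongr hxyz), ← rank_map_add_one_reindex _ (finCongr hpqr),
      ← h, rank_map_add_one_units_conj']
  simp only [Prod.mk.injEq]
  omega
end
end

section
/- For every integer m ≥ 1, Σ_{i=0}^{⌊(m−1)/2⌋} (−1)^i·C(2m, m−1−2i) = Σ_{i=0}^{m−1} 2^{m−1−i}·C(2i, i). Equivalently, Σ_{k=0}^{m} C(2m, k)·sin((m−k)π/2) = Σ_{k=0}^{m−1} 2^{m−1−k}·C(2k, k). -/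
/-!
Write `P(n, k) = ∑_j (-1)^j C(n, k - 2j)`, the coefficient of `x^k` in `(1 + x)^n / (1 + x^2)`.
Then `P(n, k + 2) + P(n, k) = C(n, k + 2)`, and `P` obeys Pascal's rule, since `(1 + x)^n / (1 + x^2)`
times `1 + x` is `(1 + x)^(n+1) / (1 + x^2)`. Applying Pascal's rule twice gives
`P(n + 2, k + 1) = C(n, k + 1) + 2 P(n, k)`, so `a_s = P(2s + 2, s)` satisfies
`a_{s+1} = 2 a_s + C(2s + 2, s + 1)`, the recurrence of `∑_{i ≤ s} 2^(s-i) C(2i, i)`.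
The sine form is the same sum read backwards, as `sin(jπ/2)` vanishes for even `j` and is
`(-1)^i` for `j = 2i + 1`.
-/

open CategoryTheory AlgebraicTopology Finset

noncomputable section

/-- The coefficient of `x^k` in `(1 + x)^n / (1 + x^2)`. -/
def altChooseSum (n k : ℕ) : ℤ :=
  ∑ j ∈ range (k / 2 + 1), (-1) ^ j * (n.choose (k - 2 * j) : ℤ)

@[simp]
lemma altChooseSum_zero_right (n : ℕ) : altChooseSum n 0 = 1 := by
  simp [altChooseSum]

@[simp]
lemma altChooseSum_one_right (n : ℕ) : altChooseSum n 1 = n := by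
  simp [altChooseSum]

lemma altChooseSum_add_two_add (n k : ℕ) :
    altChooseSum n (k + 2) + altChooseSum n k = n.choose (k + 2) := by
  rw [altChooseSum, show (k + 2) / 2 + 1 = k / 2 + 1 + 1 by omega, sum_range_succ',
    altChooseSum, add_right_comm, ← sum_add_distrib]
  simp [pow_succ, show ∀ j, k + 2 - 2 * (j + 1) = k - 2 * j by omega]

lemma altChooseSum_succ_succ (n k : ℕ) :
    altChooseSum (n + 1) (k + 1) = altChooseSum n (k + 1) + altChooseSum n k := by
  induction k using Nat.twoStepInduction with
  | zero => simp
  | one =>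
    linear_combination (norm := (simp; ring))
      altChooseSum_add_two_add (n + 1) 0 - altChooseSum_add_two_add n 0
      + (by norm_cast : ((n + 1).choose 2 : ℤ) = n.choose 1 + n.choose 2)
  | more k ih _ =>
    linear_combination altChooseSum_add_two_add (n + 1) (k + 1) - altChooseSum_add_two_add n (k + 1)
      - altChooseSum_add_two_add n k - ih
      + (by norm_cast : ((n + 1).choose (k + 3) : ℤ) = n.choose (k + 2) + n.choose (k + 3))

lemma altChooseSum_add_two_succ (n k : ℕ) :
    altChooseSum (n + 2) (k + 1) = n.choose (k + 1) + 2 * altChooseSum n k := by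
  rw [altChooseSum_succ_succ, altChooseSum_succ_succ]
  rcases k with _ | k
  · simp only [zero_add, altChooseSum_one_right, altChooseSum_zero_right, Nat.choose_one_right]
    push_cast
    ring
  · rw [altChooseSum_succ_succ, ← altChooseSum_add_two_add n k]
    ring

lemma sum_range_pow_sub_mul_succ {R : Type*} [CommSemiring R] (x : R) (c : ℕ → R) (s : ℕ) :
    ∑ i ∈ range (s + 2), x ^ (s + 1 - i) * c i
      = x * ∑ i ∈ range (s + 1), x ^ (s - i) * c i + c (s + 1) := by
  rw [sum_range_succ, mul_sum, Nat.sub_self, pow_zero, one_mul]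
  congr 1
  refine sum_congr rfl fun i hi => ?_
  rw [Nat.sub_add_comm (mem_range_succ_iff.mp hi), pow_succ']
  ring

lemma altChooseSum_two_mul_succ_eq_sum (s : ℕ) :
    altChooseSum (2 * (s + 1)) s = ∑ i ∈ range (s + 1), 2 ^ (s - i) * ((2 * i).choose i : ℤ) := by
  induction s with
  | zero => simp
  | succ s ih =>
    rw [show 2 * (s + 1 + 1) = 2 * (s + 1) + 2 by ring, altChooseSum_add_two_succ, ih,
      sum_range_pow_sub_mul_succ]
    ring

lemma Real.sin_two_mul_add_one_mul_pi_div_two (i : ℕ) :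
    Real.sin ((2 * i + 1) * Real.pi / 2) = (-1) ^ i := by
  rw [show (2 * i + 1) * Real.pi / 2 = i * Real.pi + Real.pi / 2 by ring,
    Real.sin_add_pi_div_two, Real.cos_nat_mul_pi]

lemma sum_choose_mul_sin_eq_altChooseSum (n m : ℕ) (hm : 1 ≤ m) :
    ∑ k ∈ range (m + 1), (n.choose k : ℝ) * Real.sin (((m : ℝ) - k) * Real.pi / 2)
      = altChooseSum n (m - 1) := by
  set g : ℕ → ℝ := fun j => n.choose (m - j) * Real.sin (j * Real.pi / 2)
  have reflect : ∀ j ∈ range (m + 1), (n.choose (m + 1 - 1 - j) : ℝ)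
      * Real.sin (((m : ℝ) - (m + 1 - 1 - j : ℕ)) * Real.pi / 2) = g j := by
    intro j hj
    rw [Nat.add_sub_cancel, Nat.cast_sub (mem_range_succ_iff.mp hj), sub_sub_cancel]
  have odd_terms : (altChooseSum n (m - 1) : ℝ)
      = ∑ j ∈ (range ((m - 1) / 2 + 1)).image (fun i => 2 * i + 1), g j := by
    rw [sum_image fun _ _ _ _ h => by omega, altChooseSum]
    push_cast
    refine sum_congr rfl fun i hi => ?_
    simp only [g, show m - (2 * i + 1) = m - 1 - 2 * i by omega]
    push_cast
    rw [Real.sin_two_mul_add_one_mul_pi_div_two, mul_comm]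
  rw [← sum_range_reflect, sum_congr rfl reflect, odd_terms]
  refine (sum_subset ?_ fun j hjm hj => ?_).symm
  · intro j
    simp only [mem_image, mem_range]
    omega
  · obtain ⟨i, rfl⟩ : Even j := by
      by_contra hodd
      obtain ⟨i, rfl⟩ := Nat.not_even_iff_odd.mp hodd
      exact hj (mem_image.mpr ⟨i, mem_range.mpr (by grind), rfl⟩)
    rw [show ((i + i : ℕ) : ℝ) * Real.pi / 2 = i * Real.pi by push_cast; ring, Real.sin_nat_mul_pi,
      mul_zero]

/-- The combinatorial identity
`∑_{i=0}^{⌊(m-1)/2⌋} (-1)^i C(2m, m-1-2i) = ∑_{i=0}^{m-1} 2^{m-1-i} C(2i, i)`;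
equivalently `∑_{k=0}^{m} C(2m, k) sin((m-k)π/2) = ∑_{k=0}^{m-1} 2^{m-1-k} C(2k, k)`. -/
theorem statement15 (m : ℕ) (hm : 1 ≤ m) :
    ((∑ i ∈ Finset.range ((m-1)/2 + 1), (-1 : ℤ)^i * (2*m).choose (m-1-2*i))
      = ∑ i ∈ Finset.range m, 2^(m-1-i) * ((2*i).choose i : ℤ)) ∧
    ((∑ k ∈ Finset.range (m+1),
        ((2*m).choose k : ℝ) * Real.sin (((m : ℝ) - (k : ℝ)) * Real.pi / 2))
      = ∑ k ∈ Finset.range m, 2^(m-1-k) * ((2*k).choose k : ℝ)) := by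
  obtain ⟨s, rfl⟩ : ∃ s, m = s + 1 := ⟨m - 1, by omega⟩
  have h := altChooseSum_two_mul_succ_eq_sum s
  refine ⟨h, ?_⟩
  rw [sum_choose_mul_sin_eq_altChooseSum _ _ hm]
  exact_mod_cast h

end
end
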